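/- Let T₁,…,Tₙ and t₁,…,tₙ be vectors in ℝ^m such that Σ_{i=1}^n T_i T_iᵀ is positive definite. Then the function Q_n(b) = Σ_{i=1}^n {−(1/2)(log(2π) + ⟨b,T_i⟩²) + log⟨b,t_i⟩} is strictly concave on the convex open set Θ_n = {b ∈ ℝ^m : ⟨b,t_i⟩ > 0 for all i ∈ {1,…,n}}; in particular Q_n has at most one maximizer on Θ_n. -/
import Mathlib

open Set

/-- The finite-sample Gaussian transform regression log-likelihood. -/
noncomputable def sampleGTObjective {n m : ℕ} (T t : Fin n → (Fin m → ℝ))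
    (b : Fin m → ℝ) : ℝ :=
  ∑ i, (-(1 / 2) * (Real.log (2 * Real.pi) + (∑ l, b l * T i l) ^ 2)
    + Real.log (∑ l, b l * t i l))

/-- Uniqueness part of Theorem 8(iii)(a): if `Σᵢ Tᵢ Tᵢᵀ` is positive definite, the sample
objective `Q_n` is strictly concave on the convex open effective domain
`Θ_n = {b : ⟨b,tᵢ⟩ > 0 ∀i}`, and in particular has at most one maximizer on `Θ_n`. -/
theorem sample_objective_strictly_concave
    {n m : ℕ} (T t : Fin n → (Fin m → ℝ))
    (hposdef : ∀ v : Fin m → ℝ, v ≠ 0 → 0 < ∑ i, (∑ l, v l * T i l) ^ 2) :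
    Convex ℝ {b : Fin m → ℝ | ∀ i, 0 < ∑ l, b l * t i l} ∧
    IsOpen {b : Fin m → ℝ | ∀ i, 0 < ∑ l, b l * t i l} ∧
    StrictConcaveOn ℝ {b : Fin m → ℝ | ∀ i, 0 < ∑ l, b l * t i l}
      (sampleGTObjective T t) ∧
    (∀ b₁ b₂ : Fin m → ℝ,
      (∀ i, 0 < ∑ l, b₁ l * t i l) → (∀ i, 0 < ∑ l, b₂ l * t i l) →
      (∀ b : Fin m → ℝ, (∀ i, 0 < ∑ l, b l * t i l) →
        sampleGTObjective T t b ≤ sampleGTObjective T t b₁) →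
      (∀ b : Fin m → ℝ, (∀ i, 0 < ∑ l, b l * t i l) →
        sampleGTObjective T t b ≤ sampleGTObjective T t b₂) →
      b₁ = b₂) := by
  set S : Set (Fin m → ℝ) := {b : Fin m → ℝ | ∀ i, 0 < ∑ l, b l * t i l} with hS
  -- convexity
  have hconv : Convex ℝ S := by
    intro x hx y hy a b ha hb hab
    intro i
    have hsum : (∑ l, (a • x + b • y) l * t i l)
        = a * (∑ l, x l * t i l) + b * (∑ l, y l * t i l) := by
      simp [Pi.add_apply, Pi.smul_apply, smul_eq_mul, add_mul, mul_assoc,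
        Finset.sum_add_distrib, Finset.mul_sum]
    rw [hsum]
    rcases ha.lt_or_eq with ha' | ha'
    · have := mul_pos ha' (hx i)
      nlinarith [mul_nonneg hb (hy i).le]
    · have hb1 : b = 1 := by linarith
      have := hy i
      rw [← ha', hb1]; simpa using this
  -- openness
  have hopen : IsOpen S := by
    have : S = ⋂ i, {b : Fin m → ℝ | 0 < ∑ l, b l * t i l} := by
      ext b; simp [hS]
    rw [this]
    refine isOpen_iInter_of_finite fun i => ?_
    have hc : Continuous fun b : Fin m → ℝ => ∑ l, b l * t i l := by
      continuity
    exact isOpen_lt continuous_const hc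
  -- strict concavity
  have hsc : StrictConcaveOn ℝ S (sampleGTObjective T t) := by
    refine ⟨hconv, ?_⟩
    intro x hx y hy hxy a b ha hb hab
    have hmem : a • x + b • y ∈ S := hconv hx hy ha.le hb.le hab
    simp only [smul_eq_mul]
    set Lx : Fin n → ℝ := fun i => ∑ l, x l * T i l
    set Ly : Fin n → ℝ := fun i => ∑ l, y l * T i l
    set Mx : Fin n → ℝ := fun i => ∑ l, x l * t i l
    set My : Fin n → ℝ := fun i => ∑ l, y l * t i l
    have hLz : ∀ i, (∑ l, (a • x + b • y) l * T i l) = a * Lx i + b * Ly i := by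
      intro i
      simp [Lx, Ly, Pi.add_apply, Pi.smul_apply, smul_eq_mul, add_mul, mul_assoc,
        Finset.sum_add_distrib, Finset.mul_sum]
    have hMz : ∀ i, (∑ l, (a • x + b • y) l * t i l) = a * Mx i + b * My i := by
      intro i
      simp [Mx, My, Pi.add_apply, Pi.smul_apply, smul_eq_mul, add_mul, mul_assoc,
        Finset.sum_add_distrib, Finset.mul_sum]
    -- termwise lower bound
    have hterm : ∀ i,
        1 / 2 * (a * b) * (Lx i - Ly i) ^ 2 ≤
        (-(1 / 2) * (Real.log (2 * Real.pi) + (a * Lx i + b * Ly i) ^ 2)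
          + Real.log (a * Mx i + b * My i))
        - (a * (-(1 / 2) * (Real.log (2 * Real.pi) + Lx i ^ 2) + Real.log (Mx i))
          + b * (-(1 / 2) * (Real.log (2 * Real.pi) + Ly i ^ 2) + Real.log (My i))) := by
      intro i
      have hlog : a * Real.log (Mx i) + b * Real.log (My i)
          ≤ Real.log (a * Mx i + b * My i) := by
        have := (strictConcaveOn_log_Ioi.concaveOn).2 (hx i) (hy i) ha.le hb.le hab
        simpa [smul_eq_mul] using this
      have hb' : b = 1 - a := by linarith
      have hq : -(1 / 2) * (Real.log (2 * Real.pi) + (a * Lx i + b * Ly i) ^ 2)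
          - (a * (-(1 / 2) * (Real.log (2 * Real.pi) + Lx i ^ 2))
            + b * (-(1 / 2) * (Real.log (2 * Real.pi) + Ly i ^ 2)))
          = 1 / 2 * (a * b) * (Lx i - Ly i) ^ 2 := by
        rw [hb']; ring
      linarith
    have hpos : 0 < ∑ i, (Lx i - Ly i) ^ 2 := by
      have hne : x - y ≠ 0 := sub_ne_zero.mpr hxy
      calc (0:ℝ) < ∑ i, (∑ l, (x - y) l * T i l) ^ 2 := hposdef _ hne
        _ = ∑ i, (Lx i - Ly i) ^ 2 := Finset.sum_congr rfl fun i _ => by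
            congr 1
            simp [Lx, Ly, Pi.sub_apply, sub_mul, Finset.sum_sub_distrib]
    have hsum : ∑ i, 1 / 2 * (a * b) * (Lx i - Ly i) ^ 2
        = 1 / 2 * (a * b) * ∑ i, (Lx i - Ly i) ^ 2 := by
      rw [Finset.mul_sum]
    have hgt : 0 < ∑ i, 1 / 2 * (a * b) * (Lx i - Ly i) ^ 2 := by
      rw [hsum]; positivity
    have hle : ∑ i, 1 / 2 * (a * b) * (Lx i - Ly i) ^ 2
        ≤ sampleGTObjective T t (a • x + b • y)
          - (a * sampleGTObjective T t x + b * sampleGTObjective T t y) := by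
      unfold sampleGTObjective
      rw [Finset.mul_sum, Finset.mul_sum, ← Finset.sum_add_distrib, ← Finset.sum_sub_distrib]
      refine Finset.sum_le_sum fun i _ => ?_
      rw [hLz i, hMz i]
      exact hterm i
    linarith
  refine ⟨hconv, hopen, hsc, ?_⟩
  intro b₁ b₂ h₁ h₂ hmax₁ hmax₂
  by_contra hne
  have hQeq : sampleGTObjective T t b₁ = sampleGTObjective T t b₂ :=
    le_antisymm (hmax₂ b₁ h₁) (hmax₁ b₂ h₂)
  have h12 : (1:ℝ)/2 + 1/2 = 1 := by norm_num
  have hmid := hsc.2 h₁ h₂ hne (by norm_num : (0:ℝ) < 1/2) (by norm_num : (0:ℝ) < 1/2) h12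
  have hmemmid : (1/2 : ℝ) • b₁ + (1/2 : ℝ) • b₂ ∈ S :=
    hconv h₁ h₂ (by norm_num) (by norm_num) h12
  have := hmax₁ _ hmemmid
  simp only [smul_eq_mul] at hmid
  linarith [hmid, this, hQeq.symm ▸ le_refl (sampleGTObjective T t b₁)]
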